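/- For 1 ≤ s ≤ n, the number-of-ones enumerator of [s]-restricted parking functions satisfies Σ_{π ∈ PF_{n|[s]}} x^{#π⁻¹({1})} = (s−1+x)^n − Σ_{i=0}^{s−1} C(n,i)·x·(x+i)^{i−1}·(s−i−1)^{n−i} as polynomials in x. -/

import Mathlib

/-!
Sort the functions `f : [n] → [s]` by the first `k` for which at most `k` cars prefer the first
`k + 1` spots. If there is no such `k < n`, `f` is a parking function. Otherwise exactly `k` cars
prefer the first `k` spots and form a parking function there, while the other `n - k` cars prefer
one of the last `s - k - 1` spots. Weighting `f` by `x ^ #f⁻¹(1)` and summing over all `f` gives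
`(s - 1 + x)^n = PF_{n|[s]}(x) + ∑_{k < min n s} C(n,k) (s - 1 - k)^(n - k) PF_k(x)`.
For `s ≥ n` this expresses `PF_n = PF_{n|[s]}` through `PF_k`, `k < n`, and comparing with Abel's
identity `∑_k C(n,k) x (x + k)^(k - 1) (y - k)^(n - k) = (x + y)^n` at `y = s - 1` gives
`PF_n(x) = x (x + n)^(n - 1)` by induction. Abel's identity is in turn proved by induction on `n`:
both sides have `y`-derivative `n` times the previous case, and both vanish at `y = -x`, the left
side because it becomes an `n`-th finite difference of a polynomial of degree `n - 1`.
-/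

open Finset Polynomial

noncomputable def abelPoly (k : ℕ) : ℤ[X] := if k = 0 then 1 else X * (X + C (k : ℤ)) ^ (k - 1)

lemma abelPoly_mul_X_add_C_pow {k m : ℕ} (hk : k ≤ m + 1) :
    abelPoly k * (X + C (k : ℤ)) ^ (m + 1 - k) = X * (X + C (k : ℤ)) ^ m := by
  rcases Nat.eq_zero_or_pos k with rfl | hk0
  · simp [abelPoly, pow_succ']
  · rw [abelPoly, if_neg hk0.ne', mul_assoc, ← pow_add]
    congr 2
    omega

/-- The outer variable plays the role of `y` in Abel's identity
`∑ k, (m choose k) x (x + k)^(k-1) (y - k)^(m-k) = (x + y)^m`. -/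
noncomputable def abelSum (m : ℕ) : ℤ[X][X] :=
  ∑ k ∈ range (m + 1), C (m.choose k * abelPoly k) * (X - C (C (k : ℤ))) ^ (m - k)

lemma derivative_abelSum_succ (m : ℕ) :
    derivative (abelSum (m + 1)) = C ((m + 1 : ℕ) : ℤ[X]) * abelSum m := by
  rw [abelSum, abelSum, derivative_sum, sum_range_succ, mul_sum]
  simp only [derivative_C_mul, derivative_X_sub_C_pow, Nat.sub_self, Nat.cast_zero, C_0,
    zero_mul, mul_zero, add_zero]
  refine sum_congr rfl fun k _ => ?_
  have hchoose :
      ((m + 1).choose k : ℤ[X]) * ((m + 1 - k : ℕ) : ℤ[X]) = (m + 1 : ℕ) * m.choose k := by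
    rw [← Nat.cast_mul, ← Nat.cast_mul, ← Nat.choose_mul_succ_eq, mul_comm]
  rw [show m + 1 - k - 1 = m - k by omega, ← mul_assoc, ← C_mul, ← mul_assoc, ← C_mul]
  congr 2
  linear_combination abelPoly k * hchoose

lemma eval_neg_X_abelSum_succ (m : ℕ) : (abelSum (m + 1)).eval (-X) = 0 := by
  have hterm : ∀ k ∈ range (m + 2),
      ((m + 1).choose k : ℤ[X]) * abelPoly k * (-X - C (k : ℤ)) ^ (m + 1 - k) =
        X * (((-1 : ℤ) ^ (m + 1 - k) * (m + 1).choose k) • (X + k • (1 : ℤ[X])) ^ m) := by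
    intro k hk
    rw [show -X - C (k : ℤ) = -(X + C (k : ℤ)) by ring, neg_pow, nsmul_one,
      ← map_natCast C k, zsmul_eq_mul]
    push_cast
    linear_combination ((-1) ^ (m + 1 - k) * (m + 1).choose k : ℤ[X]) *
      abelPoly_mul_X_add_C_pow (Nat.lt_succ_iff.mp (mem_range.mp hk))
  have hdiff := congr_fun (fwdDiff_iter_pow_eq_zero_of_lt (R := ℤ[X]) (Nat.lt_succ_self m)) X
  rw [fwdDiff_iter_eq_sum_shift] at hdiff
  simp only [abelSum, eval_finsetSum, eval_mul, eval_C, eval_pow, eval_sub, eval_X]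
  rw [sum_congr rfl hterm, ← mul_sum, hdiff, Pi.zero_apply, mul_zero]

theorem abelSum_eq (m : ℕ) : abelSum m = (C X + X) ^ m := by
  induction m with
  | zero => simp [abelSum, abelPoly]
  | succ m ih =>
    have hder : derivative (abelSum (m + 1) - (C X + X) ^ (m + 1)) = 0 := by
      rw [derivative_sub, derivative_abelSum_succ, ih, derivative_pow]
      simp
    have heval : (abelSum (m + 1) - (C X + X) ^ (m + 1)).eval (-X) = 0 := by
      simp [eval_neg_X_abelSum_succ]
    rw [eq_C_of_derivative_eq_zero hder, eval_C] at heval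
    rw [← sub_eq_zero, eq_C_of_derivative_eq_zero hder, heval, C_0]

theorem sum_choose_mul_abelPoly (m : ℕ) (y : ℤ) :
    ∑ k ∈ range (m + 1), C (m.choose k * (y - k) ^ (m - k)) * abelPoly k = (C y + X) ^ m := by
  have h := congrArg (eval (C y)) (abelSum_eq m)
  simp only [abelSum, eval_finsetSum, eval_mul, eval_C, eval_pow, eval_sub, eval_X,
    eval_add] at h
  rw [add_comm (C y), ← h]
  refine sum_congr rfl fun k _ => ?_
  simp only [C_mul, C_pow, C_sub, map_natCast]
  ring

lemma sum_range_mul_abelPoly {s : ℕ} (hs : 0 < s) (c : ℕ → ℤ) :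
    ∑ k ∈ range s, C (c k) * abelPoly k =
      C (c 0) + ∑ i ∈ Icc 1 (s - 1), C (c i) * X * (X + C (i : ℤ)) ^ (i - 1) := by
  obtain ⟨t, rfl⟩ : ∃ t, s = t + 1 := ⟨s - 1, by omega⟩
  rw [sum_range_succ', Nat.add_sub_cancel, ← Ico_add_one_right_eq_Icc, sum_Ico_eq_sum_range,
    Nat.add_sub_cancel, abelPoly, if_pos rfl, mul_one, add_comm]
  refine congrArg _ (sum_congr rfl fun k _ => ?_)
  rw [add_comm 1 k, abelPoly, if_neg k.succ_ne_zero, mul_assoc]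

section Parking

variable {ι : Type*} [Fintype ι] {s : ℕ}

/-- Spots are numbered from `0`, so `countBelow f 1` counts the cars preferring spot `1` of `[s]`. -/
def countBelow (f : ι → Fin s) (i : ℕ) : ℕ := #{j | (f j : ℕ) < i}

def ParksUpTo (f : ι → Fin s) (k : ℕ) : Prop := ∀ i ∈ Icc 1 k, i ≤ countBelow f i

instance (k : ℕ) : DecidablePred fun f : ι → Fin s => ParksUpTo f k :=
  fun _ => inferInstanceAs (Decidable (∀ i ∈ Icc 1 k, _))

lemma countBelow_mono (f : ι → Fin s) {i i' : ℕ} (h : i ≤ i') : countBelow f i ≤ countBelow f i' :=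
  card_le_card fun j => by simp only [mem_filter, mem_univ, true_and]; omega

lemma countBelow_le_card (f : ι → Fin s) (i : ℕ) : countBelow f i ≤ Fintype.card ι :=
  (card_filter_le _ _).trans_eq card_univ

lemma countBelow_of_le (f : ι → Fin s) {i : ℕ} (h : s ≤ i) : countBelow f i = Fintype.card ι := by
  rw [countBelow, filter_true_of_mem fun j _ => (f j).isLt.trans_le h, card_univ]

lemma countBelow_eq_zero (f : ι → Fin s) {i : ℕ} (h : ∀ j, i ≤ (f j : ℕ)) : countBelow f i = 0 := by
  rw [countBelow, card_eq_zero, filter_eq_empty_iff]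
  exact fun j _ => (h j).not_gt

lemma countBelow_eq_add (p : ι → Prop) [DecidablePred p] (f : ι → Fin s) (i : ℕ) :
    countBelow f i =
      countBelow (fun j : {j // p j} => f j) i + countBelow (fun j : {j // ¬p j} => f j) i := by
  simp only [countBelow, card_filter]
  exact (Fintype.sum_subtype_add_sum_subtype p _).symm

lemma ParksUpTo.le_countBelow {f : ι → Fin s} {k : ℕ} (hf : ParksUpTo f k) :
    k ≤ countBelow f k := by
  rcases Nat.eq_zero_or_pos k with rfl | hk
  · exact Nat.zero_le _
  · exact hf k (mem_Icc.mpr ⟨hk, le_rfl⟩)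

lemma ParksUpTo.lt_card {f : ι → Fin s} (hf : ParksUpTo f (Fintype.card ι)) (j : ι) :
    (f j : ℕ) < Fintype.card ι := by
  have hall := le_antisymm (countBelow_le_card f _) hf.le_countBelow
  rw [countBelow, ← card_univ, card_filter_eq_iff] at hall
  exact hall j (mem_univ j)

def firstDeficit (f : ι → Fin s) : ℕ :=
  Nat.find (⟨Fintype.card ι, countBelow_le_card f _⟩ : ∃ k, countBelow f (k + 1) ≤ k)

lemma firstDeficit_eq_iff {f : ι → Fin s} {k : ℕ} :
    firstDeficit f = k ↔ countBelow f (k + 1) ≤ k ∧ ParksUpTo f k := by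
  rw [firstDeficit, Nat.find_eq_iff]
  refine and_congr_right fun _ => ⟨fun h i hi => ?_, fun h i hi hle => ?_⟩
  · obtain ⟨hi1, hik⟩ := mem_Icc.mp hi
    have := h (i - 1) (by omega)
    rw [Nat.sub_add_cancel hi1] at this
    omega
  · have := h (i + 1) (mem_Icc.mpr ⟨by omega, hi⟩)
    omega

lemma firstDeficit_le_card (f : ι → Fin s) : firstDeficit f ≤ Fintype.card ι :=
  Nat.find_min' _ (countBelow_le_card f _)

lemma firstDeficit_eq_card_iff {f : ι → Fin s} :
    firstDeficit f = Fintype.card ι ↔ ParksUpTo f (Fintype.card ι) := by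
  rw [firstDeficit_eq_iff]
  exact and_iff_right (countBelow_le_card f _)

lemma countBelow_firstDeficit_succ (f : ι → Fin s) :
    countBelow f (firstDeficit f + 1) = firstDeficit f := by
  obtain ⟨hle, hparks⟩ := firstDeficit_eq_iff.mp (rfl : firstDeficit f = _)
  exact le_antisymm hle (hparks.le_countBelow.trans (countBelow_mono f (Nat.le_succ _)))

lemma firstDeficit_lt_of_lt_card {f : ι → Fin s} (h : firstDeficit f < Fintype.card ι) :
    firstDeficit f < s := by
  by_contra! hs
  have := countBelow_firstDeficit_succ f
  rw [countBelow_of_le f (by omega)] at this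
  omega

variable [DecidableEq ι]

variable (ι s) in
/-- `PF_{n|[s]}(x)` with `n = Fintype.card ι`. -/
noncomputable def parkingEnum : ℤ[X] :=
  ∑ f : ι → Fin s with ParksUpTo f (Fintype.card ι), X ^ countBelow f 1

lemma sum_X_pow_countBelow_one (hs : 0 < s) :
    ∑ f : ι → Fin s, X ^ countBelow f 1 = (C ((s : ℤ) - 1) + X) ^ Fintype.card ι := by
  obtain ⟨t, rfl⟩ : ∃ t, s = t + 1 := ⟨s - 1, by omega⟩
  let w : ι → Fin (t + 1) → ℤ[X] := fun _ v => if (v : ℕ) < 1 then X else 1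
  calc ∑ f : ι → Fin (t + 1), X ^ countBelow f 1
      = ∑ f : ι → Fin (t + 1), ∏ j, w j (f j) :=
        sum_congr rfl fun f _ => by rw [← prod_filter, prod_const, countBelow]
    _ = ∏ j, ∑ v, w j v := (Fintype.prod_sum w).symm
    _ = _ := by simp [w, Fin.sum_univ_succ, add_comm]

lemma countBelow_eq_of_forall_le (S : Finset ι) (f : ι → Fin s) {i : ℕ}
    (h : ∀ j : {j // j ∉ S}, i ≤ (f j : ℕ)) : countBelow f i = countBelow (fun j : S => f j) i := by
  have := countBelow_eq_add (· ∈ S) f i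
  rw [countBelow_eq_zero (fun j : {j // j ∉ S} => f j) h, add_zero] at this
  convert this using 2

lemma firstDeficit_eq_card_and_filter_eq_iff (S : Finset ι) (f : ι → Fin s) :
    (firstDeficit f = #S ∧ ({j | (f j : ℕ) < #S + 1} : Finset ι) = S) ↔
      ParksUpTo (fun j : S => f j) (Fintype.card S) ∧ ∀ j : {j // j ∉ S}, #S < (f j : ℕ) := by
  have hcard : Fintype.card S = #S := Fintype.card_coe S
  have hsplit {i : ℕ} (hi : i ≤ #S + 1) (hout : ∀ j : {j // j ∉ S}, #S < (f j : ℕ)) :=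
    countBelow_eq_of_forall_le S f fun j => hi.trans (hout j)
  constructor
  · rintro ⟨hfd, hS⟩
    have hout (j : {j // j ∉ S}) : #S < (f j : ℕ) := by
      have : (j : ι) ∉ ({j | (f j : ℕ) < #S + 1} : Finset ι) := by rw [hS]; exact j.2
      simpa [Nat.lt_succ_iff] using this
    refine ⟨fun i hi => ?_, hout⟩
    rw [hcard] at hi
    rw [← hsplit (by linarith [(mem_Icc.mp hi).2]) hout]
    exact (firstDeficit_eq_iff.mp hfd).2 i hi
  · rintro ⟨hparks, hout⟩
    have hin (j : ι) (hj : j ∈ S) : (f j : ℕ) < #S := hcard ▸ hparks.lt_card ⟨j, hj⟩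
    rw [hcard] at hparks
    refine ⟨firstDeficit_eq_iff.mpr ⟨?_, fun i hi => ?_⟩, ?_⟩
    · rw [hsplit le_rfl hout, ← hcard]
      exact countBelow_le_card _ _
    · rw [hsplit (by linarith [(mem_Icc.mp hi).2]) hout]
      exact hparks i hi
    · ext j
      by_cases hj : j ∈ S
      · simpa [hj] using (hin j hj).le
      · simpa [hj] using hout ⟨j, hj⟩

lemma card_filter_forall_lt (α : Type*) [Fintype α] [DecidableEq α] {k : ℕ} (hk : k < s) :
    #{h : α → Fin s | ∀ j, k < (h j : ℕ)} = (s - 1 - k) ^ Fintype.card α := by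
  have : ({h : α → Fin s | ∀ j, k < (h j : ℕ)} : Finset _) =
      Fintype.piFinset fun _ => Ioi ⟨k, hk⟩ := by
    ext h
    simp [Fintype.mem_piFinset, Fin.lt_def]
  rw [this, Fintype.card_piFinset, prod_const, Fin.card_Ioi, card_univ]

lemma sum_firstDeficit_eq_card_of_filter_eq (S : Finset ι) (hS : #S < s) :
    ∑ f : ι → Fin s with firstDeficit f = #S ∧ ({j | (f j : ℕ) < #S + 1} : Finset ι) = S,
        X ^ countBelow f 1 =
      C (((s : ℤ) - 1 - #S) ^ (Fintype.card ι - #S)) * parkingEnum S s := by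
  let T : Finset ({j // j ∉ S} → Fin s) := {h | ∀ j, #S < (h j : ℕ)}
  have hT : #T = (s - 1 - #S) ^ (Fintype.card ι - #S) := by
    rw [card_filter_forall_lt _ hS, Fintype.card_subtype_compl, Fintype.card_coe]
  rw [sum_equiv (Equiv.piEquivPiSubtypeProd (· ∈ S) fun _ => Fin s)
    (t := ({g : S → Fin s | ParksUpTo g (Fintype.card S)} : Finset _) ×ˢ T)
    (g := fun p => X ^ countBelow p.1 1)]
  · rw [sum_product, parkingEnum, mul_sum]
    refine sum_congr rfl fun g _ => ?_
    simp only [sum_const, hT, nsmul_eq_mul]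
    congr 1
    rw [← map_natCast C, Nat.cast_pow, Nat.cast_sub (by omega : #S ≤ s - 1),
      Nat.cast_sub (by omega : 1 ≤ s), Nat.cast_one]
  · intro f
    simp only [mem_filter, mem_univ, true_and, mem_product, T,
      firstDeficit_eq_card_and_filter_eq_iff]
    rfl
  · intro f hf
    rw [mem_filter, firstDeficit_eq_card_and_filter_eq_iff] at hf
    rw [countBelow_eq_of_forall_le S f fun j => (Nat.zero_le _).trans_lt (hf.2.2 j)]
    rfl

lemma sum_firstDeficit_eq {k : ℕ} (hk : k < s) :
    ∑ f : ι → Fin s with firstDeficit f = k, X ^ countBelow f 1 =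
      ∑ S ∈ powersetCard k (univ : Finset ι),
        C (((s : ℤ) - 1 - k) ^ (Fintype.card ι - k)) * parkingEnum S s := by
  rw [← sum_fiberwise_of_maps_to (g := fun f : ι → Fin s => ({j | (f j : ℕ) < k + 1} : Finset ι))
    (t := powersetCard k univ) fun f hf => ?_]
  · refine sum_congr rfl fun S hS => ?_
    obtain rfl := (mem_powersetCard_univ.mp hS)
    rw [filter_filter, sum_firstDeficit_eq_card_of_filter_eq S hk]
  · rw [mem_filter] at hf
    rw [mem_powersetCard_univ, ← hf.2]
    exact countBelow_firstDeficit_succ f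

lemma pow_eq_parkingEnum_add_sum (hs : 0 < s) :
    (C ((s : ℤ) - 1) + X) ^ Fintype.card ι = parkingEnum ι s +
      ∑ k ∈ range (min (Fintype.card ι) s), ∑ S ∈ powersetCard k (univ : Finset ι),
        C (((s : ℤ) - 1 - k) ^ (Fintype.card ι - k)) * parkingEnum S s := by
  rw [← sum_X_pow_countBelow_one hs, ← sum_fiberwise_of_maps_to (g := firstDeficit)
    (t := range (Fintype.card ι + 1)) fun f _ => mem_range_succ_iff.mpr (firstDeficit_le_card f),
    sum_range_succ, add_comm]
  congr 1
  · exact sum_congr (filter_congr fun f _ => firstDeficit_eq_card_iff) fun _ _ => rfl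
  · rw [← sum_subset (range_subset_range.mpr (min_le_left _ s)) fun k hk hks => ?_]
    · exact sum_congr rfl fun k hk => sum_firstDeficit_eq (lt_min_iff.mp (mem_range.mp hk)).2
    · refine sum_eq_zero fun f hf => ?_
      rw [mem_filter] at hf
      have := firstDeficit_lt_of_lt_card (hf.2 ▸ mem_range.mp hk : firstDeficit f < Fintype.card ι)
      simp [hf.2, mem_range.mp hk] at hks this
      omega

lemma sum_powersetCard_mul_parkingEnum (c : ℤ) {k : ℕ}
    (h : ∀ S : Finset ι, #S = k → parkingEnum S s = abelPoly k) :
    ∑ S ∈ powersetCard k (univ : Finset ι), C c * parkingEnum S s =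
      C ((Fintype.card ι).choose k * c) * abelPoly k := by
  rw [sum_congr rfl fun S hS => by rw [h S (mem_powersetCard_univ.mp hS)], sum_const,
    card_powersetCard, card_univ, nsmul_eq_mul, C_mul, map_natCast, mul_assoc]

theorem parkingEnum_eq_abelPoly (h : Fintype.card ι ≤ s) :
    parkingEnum ι s = abelPoly (Fintype.card ι) := by
  induction hn : Fintype.card ι using Nat.strong_induction_on generalizing ι with
  | _ n ih =>
    rcases Nat.eq_zero_or_pos n with rfl | hn0
    · have : IsEmpty ι := Fintype.card_eq_zero_iff.mp hn
      simp [parkingEnum, ParksUpTo, countBelow, abelPoly]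
    · have hdec := pow_eq_parkingEnum_add_sum (ι := ι) (s := s) (by omega)
      have habel := sum_choose_mul_abelPoly n ((s : ℤ) - 1)
      rw [hn, min_eq_left (hn ▸ h)] at hdec
      rw [sum_congr rfl fun k hk => sum_powersetCard_mul_parkingEnum _ fun S hS =>
        ih k (mem_range.mp hk) (by simp [hS]; linarith [mem_range.mp hk]) (by simpa using hS)]
        at hdec
      rw [sum_range_succ, Nat.choose_self, Nat.sub_self, pow_zero, Nat.cast_one, mul_one, C_1,
        one_mul] at habel
      rw [hn] at hdec
      linear_combination -(hdec + habel)

theorem pow_eq_parkingEnum_add_sum_abelPoly (hs : 0 < s) :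
    (C ((s : ℤ) - 1) + X) ^ Fintype.card ι = parkingEnum ι s +
      ∑ k ∈ range (min (Fintype.card ι) s),
        C ((Fintype.card ι).choose k * ((s : ℤ) - 1 - k) ^ (Fintype.card ι - k)) * abelPoly k := by
  rw [pow_eq_parkingEnum_add_sum hs]
  congr 1
  refine sum_congr rfl fun k hk => sum_powersetCard_mul_parkingEnum _ fun S hS => ?_
  have hks : #S ≤ s := hS ▸ (lt_min_iff.mp (mem_range.mp hk)).2.le
  rw [parkingEnum_eq_abelPoly (by rwa [Fintype.card_coe]), Fintype.card_coe, hS]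

end Parking

-- `Classical` makes the filter below elaborate with the same instance as in the theorem.
open Classical in
lemma parkingEnum_fin (n s : ℕ) :
    parkingEnum (Fin n) s = ∑ π ∈ Finset.univ.filter
        (fun π : Fin n → Fin s =>
          ∀ i ∈ Finset.Icc 1 n,
            i ≤ (Finset.univ.filter (fun j => (π j).val + 1 ≤ i)).card),
      (X : Polynomial ℤ) ^ (Finset.univ.filter (fun j => (π j).val + 1 = 1)).card := by
  refine sum_congr ?_ fun f _ => ?_
  · ext f
    simp only [mem_filter, mem_univ, true_and, ParksUpTo, countBelow, Fintype.card_fin,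
      Nat.lt_iff_add_one_le]
  · simp [countBelow]

open Polynomial in
open Classical in
theorem restricted_ones_enumerator_complement (n s : ℕ) (h1 : 1 ≤ s) (h2 : s ≤ n) :
    ∑ π ∈ Finset.univ.filter
        (fun π : Fin n → Fin s =>
          ∀ i ∈ Finset.Icc 1 n,
            i ≤ (Finset.univ.filter (fun j => (π j).val + 1 ≤ i)).card),
      (X : Polynomial ℤ) ^ (Finset.univ.filter (fun j => (π j).val + 1 = 1)).card
    = (C ((s : ℤ) - 1) + X) ^ n - C (((s : ℤ) - 1) ^ n) -
        ∑ i ∈ Finset.Icc 1 (s - 1),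
          C (n.choose i : ℤ) * X * (X + C (i : ℤ)) ^ (i - 1) *
            C (((s : ℤ) - i - 1) ^ (n - i)) := by
  have hdec := pow_eq_parkingEnum_add_sum_abelPoly (ι := Fin n) h1
  rw [Fintype.card_fin, min_eq_right h2, sum_range_mul_abelPoly h1] at hdec
  have hterms : ∑ i ∈ Icc 1 (s - 1),
      C (n.choose i * ((s : ℤ) - 1 - i) ^ (n - i)) * X * (X + C (i : ℤ)) ^ (i - 1) =
        ∑ i ∈ Icc 1 (s - 1),
          C (n.choose i : ℤ) * X * (X + C (i : ℤ)) ^ (i - 1) * C (((s : ℤ) - i - 1) ^ (n - i)) :=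
    sum_congr rfl fun i _ => by rw [C_mul, sub_right_comm _ (1 : ℤ)]; ring
  rw [← parkingEnum_fin, ← hterms]
  simp only [Nat.choose_zero_right, Nat.cast_one, one_mul, CharP.cast_eq_zero, sub_zero,
    Nat.sub_zero] at hdec
  linear_combination -hdec
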